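/- Let G be a graph with N vertices and pN²/2 edges, and fix integers n, k with 1 ≤ k ≤ n. If a vertex v is called bad with respect to k when the number of k-sequences in N(v) with common neighborhood of size at most (2n)^{-n-1} p^k N is at least (1/(2n))|N(v)|^k, then the sum of |N(v)| over all vertices v that are bad with respect to k is at most pN²/(2n). -/

import Mathlib

open Finset
open scoped Classical

/-!
Put `t = p^k N / (2n)^(n+1)`. A bad vertex `v` has at least `|N(v)|^k / (2n)` sequences
`S` in `N(v)` with `|N(S)| ≤ t`, while double counting the pairs `(v, S)` with `v ∈ N(S)` shows
that all vertices together have at most `N^k t` such sequences. Hence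
`∑_{v bad} |N(v)|^k ≤ 2n N^k t`, and the power mean inequality
`(∑_{v bad} |N(v)|)^k ≤ N^(k-1) ∑_{v bad} |N(v)|^k` gives
`(∑_{v bad} |N(v)|)^k ≤ p^k N^(2k) / (2n)^n ≤ (p N^2 / (2n))^k`, using `k ≤ n`.
-/

namespace SimpleGraph

variable {V : Type*} [Fintype V] (G : SimpleGraph V)

noncomputable def commonNeighborFinset {k : ℕ} (S : Fin k → V) : Finset V :=
  univ.filter fun w => ∀ i, G.Adj (S i) w

noncomputable def sparseTuples (k : ℕ) (t : ℝ) (v : V) : Finset (Fin k → V) :=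
  univ.filter fun S => (∀ i, S i ∈ G.neighborFinset v) ∧ (#(G.commonNeighborFinset S) : ℝ) ≤ t

lemma card_filter_mem_sparseTuples_le (k : ℕ) {t : ℝ} (ht : 0 ≤ t) (S : Fin k → V) :
    (#{v | S ∈ G.sparseTuples k t v} : ℝ) ≤ t := by
  by_cases hS : (#(G.commonNeighborFinset S) : ℝ) ≤ t
  · refine le_trans ?_ hS
    gcongr
    intro v
    simp +contextual [sparseTuples, commonNeighborFinset, adj_comm]
  · simpa [sparseTuples, hS] using ht

/-- Each sparse sequence `S` is counted once for every `v ∈ N(S)`, i.e. at most `t` times. -/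
theorem sum_card_sparseTuples_le (k : ℕ) {t : ℝ} (ht : 0 ≤ t) :
    ∑ v, (#(G.sparseTuples k t v) : ℝ) ≤ Fintype.card V ^ k * t := by
  have hswap : ∑ v, #(G.sparseTuples k t v) = ∑ S : Fin k → V, #{v | S ∈ G.sparseTuples k t v} := by
    simpa [bipartiteAbove, bipartiteBelow] using
      sum_card_bipartiteAbove_eq_sum_card_bipartiteBelow (fun v S => S ∈ G.sparseTuples k t v)
        (s := univ) (t := univ)
  calc ∑ v, (#(G.sparseTuples k t v) : ℝ)
      = ∑ S : Fin k → V, (#{v | S ∈ G.sparseTuples k t v} : ℝ) := by exact_mod_cast hswap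
    _ ≤ ∑ _S : Fin k → V, t := sum_le_sum fun S _ => G.card_filter_mem_sparseTuples_le k ht S
    _ = Fintype.card V ^ k * t := by simp

theorem sum_degree_pow_le_of_le_card_sparseTuples (k : ℕ) {t c : ℝ} (ht : 0 ≤ t)
    (B : Finset V) (hB : ∀ v ∈ B, c * (G.degree v : ℝ) ^ k ≤ #(G.sparseTuples k t v)) :
    c * ∑ v ∈ B, (G.degree v : ℝ) ^ k ≤ Fintype.card V ^ k * t :=
  calc c * ∑ v ∈ B, (G.degree v : ℝ) ^ k
      ≤ ∑ v ∈ B, (#(G.sparseTuples k t v) : ℝ) := by rw [mul_sum]; exact sum_le_sum hB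
    _ ≤ ∑ v, (#(G.sparseTuples k t v) : ℝ) :=
        sum_le_sum_of_subset_of_nonneg (subset_univ B) fun _ _ _ => by positivity
    _ ≤ Fintype.card V ^ k * t := G.sum_card_sparseTuples_le k ht

end SimpleGraph

/-- the sum of the degrees over the vertices that are bad with
respect to `k` is at most `p N^2 / (2n)`. -/
theorem stmt2 {V : Type*} [Fintype V] (G : SimpleGraph V)
    (N n k : ℕ) (p : ℝ) (hN : Fintype.card V = N) (hk : 1 ≤ k) (hkn : k ≤ n)
    (he : (G.edgeFinset.card : ℝ) = p * N ^ 2 / 2)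
    (bad : V → Prop)
    (hbad : ∀ v, bad v ↔
      (1 / (2 * (n : ℝ))) * (G.degree v : ℝ) ^ k ≤
        ((Finset.univ.filter (fun S : Fin k → V =>
          (∀ i, S i ∈ G.neighborFinset v) ∧
          (((Finset.univ.filter (fun w => ∀ i, G.Adj (S i) w)).card : ℝ) ≤
            p ^ k * N / (2 * (n : ℝ)) ^ (n + 1)))).card : ℝ)) :
    ∑ v ∈ Finset.univ.filter (fun v => bad v), (G.degree v : ℝ) ≤
      p * N ^ 2 / (2 * n) := by
  rcases isEmpty_or_nonempty V with hV | hV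
  · simp [← hN]
  have hNpos : (0 : ℝ) < N := by rw [← hN]; exact_mod_cast Fintype.card_pos
  have hn : (1 : ℝ) ≤ 2 * n := by norm_cast; omega
  have hp : 0 ≤ p := by
    have : 0 ≤ p * N ^ 2 := by linarith [he ▸ (Nat.cast_nonneg _ : (0 : ℝ) ≤ #G.edgeFinset)]
    exact nonneg_of_mul_nonneg_left this (by positivity)
  set t := p ^ k * N / (2 * (n : ℝ)) ^ (n + 1)
  set B := univ.filter bad
  have hB := G.sum_degree_pow_le_of_le_card_sparseTuples k (t := t) (c := 1 / (2 * n))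
    (by positivity) B fun v hv => (hbad v).1 (mem_filter.1 hv).2
  rw [hN, one_div, inv_mul_le_iff₀ (by positivity)] at hB
  obtain ⟨m, rfl⟩ : ∃ m, k = m + 1 := ⟨k - 1, by omega⟩
  refine le_of_pow_le_pow_left₀ m.succ_ne_zero (by positivity) ?_
  calc (∑ v ∈ B, (G.degree v : ℝ)) ^ (m + 1)
      ≤ (#B : ℝ) ^ m * ∑ v ∈ B, (G.degree v : ℝ) ^ (m + 1) :=
        pow_sum_le_card_mul_sum_pow (fun _ _ => by positivity) m
    _ ≤ (N : ℝ) ^ m * (2 * n * (N ^ (m + 1) * t)) := by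
        gcongr
        rw [← hN]; exact_mod_cast card_le_univ B
    _ = p ^ (m + 1) * (N ^ 2) ^ (m + 1) / (2 * n) ^ n := by
        simp only [t]; field_simp; ring
    _ ≤ (p * N ^ 2 / (2 * n)) ^ (m + 1) := by
        rw [div_pow, ← mul_pow]
        gcongr
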